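/- Let Ω = ℚ/ℤ with the metric induced from the arc-length metric on ℝ/ℤ, let n be a positive integer, and let U be the set of permutations of Ω that move every point a distance < 1/(2n). Then U generates Sym(Ω) as a group, but Uⁿ ≠ Sym(Ω). -/

import Mathlib

open Pointwise

/-!
Every permutation supported on an arc of length at most `1/(2n)` moves each point by less than
`1/(2n)` along that arc, so it lies in `U`. If `A`, `B` are subsets of a countable set with
`A ∩ B`, `A \ B` and `B \ A` infinite, the permutations supported in `A` or in `B` generate all
permutations supported in `A ∪ B`: for such a `g`, three permutations supported in `A` or `B`
carry `g(A)` back to `A` (the symmetric group of a countable set is transitive on its infinite,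
coinfinite subsets), and a permutation preserving `A` is a product of one supported in `A` and one
supported in `B`. Growing the arc `[0, k/m)` by overlapping short arcs yields all of `Sym(Ω)`.
Conversely an element of `Uⁿ` moves every point by less than `n/(2n) = 1/2`, so the rotation by
`1/2` is not in `Uⁿ`.
-/

open Set MulAction Equiv

namespace Set.Infinite

variable {α : Type*}

lemma exists_subset_infinite_sdiff_infinite {T : Set α} (hT : T.Infinite) :
    ∃ S ⊆ T, S.Infinite ∧ (T \ S).Infinite := by
  let f : ℕ → α := fun k => hT.natEmbedding T k
  have hf : f.Injective := fun a b h => hT.natEmbedding T |>.injective (Subtype.val_injective h)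
  refine ⟨range (fun k => f (2 * k)), ?_, infinite_range_of_injective
    (hf.comp fun a b h => by simpa using h), ?_⟩
  · rintro _ ⟨k, rfl⟩
    exact (hT.natEmbedding T _).2
  · refine (infinite_range_of_injective (f := fun k => f (2 * k + 1))
      (hf.comp fun a b h => by simpa using h)).mono ?_
    rintro _ ⟨k, rfl⟩
    refine ⟨(hT.natEmbedding T _).2, ?_⟩
    rintro ⟨l, hl⟩
    have := hf hl
    omega

end Set.Infinite

namespace Equiv.Perm

variable {α : Type*}

lemma mem_fixingSubgroup_sup_of_mem_stabilizer {A B : Set α} {g : Perm α}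
    (hgA : g ∈ stabilizer (Perm α) A) (hg : g ∈ fixingSubgroup (Perm α) (A ∪ B)ᶜ) :
    g ∈ fixingSubgroup (Perm α) Aᶜ ⊔ fixingSubgroup (Perm α) Bᶜ := by
  classical
  have hgA_iff : ∀ x, g x ∈ A ↔ x ∈ A := fun x => by
    simpa [mem_stabilizer_iff.1 hgA] using smul_mem_smul_set_iff (a := g) (s := A) (x := x)
  set u := ofSubtype (g.subtypePerm hgA_iff)
  have hu : u ∈ fixingSubgroup (Perm α) Aᶜ :=
    (mem_fixingSubgroup_iff _).2 fun x hx => ofSubtype_subtypePerm_of_not_mem hgA_iff hx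
  have hv : u⁻¹ * g ∈ fixingSubgroup (Perm α) Bᶜ := by
    refine (mem_fixingSubgroup_iff _).2 fun x hxB => ?_
    rw [Perm.smul_def, mul_apply, Perm.inv_eq_iff_eq]
    by_cases hxA : x ∈ A
    · exact (ofSubtype_subtypePerm_of_mem hgA_iff hxA).symm
    · have hx : x ∈ (A ∪ B)ᶜ := by simp [hxA, hxB]
      rw [show g x = x from (mem_fixingSubgroup_iff _).1 hg x hx]
      exact (ofSubtype_subtypePerm_of_not_mem hgA_iff hxA).symm
  simpa using Subgroup.mul_mem_sup hu hv

section Countable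

variable [Countable α]

lemma exists_smul_eq_of_infinite {V W : Set α} (hV : V.Infinite) (hVc : Vᶜ.Infinite)
    (hW : W.Infinite) (hWc : Wᶜ.Infinite) : ∃ f : Perm α, f • V = W := by
  classical
  have := hV.to_subtype; have := hVc.to_subtype; have := hW.to_subtype; have := hWc.to_subtype
  obtain ⟨e⟩ : Nonempty (V ≃ W) := inferInstance
  obtain ⟨e'⟩ : Nonempty (↥Vᶜ ≃ ↥Wᶜ) := inferInstance
  let f : Perm α := (Set.sumCompl V).symm.trans ((Equiv.sumCongr e e').trans (Set.sumCompl W))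
  have hf : ∀ x (hx : x ∈ V), f x = e ⟨x, hx⟩ := fun x hx => by
    simp [f, Set.sumCompl_symm_apply_of_mem hx]
  refine ⟨f, Set.ext fun y => ⟨?_, fun hy => ⟨_, (e.symm ⟨y, hy⟩).2, ?_⟩⟩⟩
  · rintro ⟨x, hx, rfl⟩
    exact (hf x hx ▸ (e _).2 :)
  · change f _ = y
    simp [hf _ (e.symm ⟨y, hy⟩).2]

lemma exists_mem_fixingSubgroup_smul_eq {C V W : Set α} (hVC : (V ∩ C).Infinite)
    (hCV : (C \ V).Infinite) (hWC : W ⊆ C) (hW : W.Infinite) (hCW : (C \ W).Infinite) :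
    ∃ f ∈ fixingSubgroup (Perm α) Cᶜ, f • V = V \ C ∪ W := by
  classical
  have hinf : ∀ {S : Set α}, (C ∩ S).Infinite → (((↑) : C → α) ⁻¹' S).Infinite := fun h =>
    .of_image _ (by rwa [Subtype.image_preimage_coe])
  obtain ⟨g, hg⟩ := exists_smul_eq_of_infinite (hinf (S := V) (by rwa [inter_comm]))
    (preimage_compl ▸ hinf (by rwa [← sdiff_eq])) (hinf (S := W) (by rwa [inter_eq_right.2 hWC]))
    (preimage_compl ▸ hinf (by rwa [← sdiff_eq]))
  refine ⟨ofSubtype g, (mem_fixingSubgroup_iff _).2 fun x hx => ofSubtype_apply_of_not_mem g hx,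
    ?_⟩
  ext y
  constructor
  · rintro ⟨x, hx, rfl⟩
    change ofSubtype g x ∈ V \ C ∪ W
    by_cases hxC : x ∈ C
    · have : g ⟨x, hxC⟩ ∈ g • (((↑) : C → α) ⁻¹' V) := smul_mem_smul_set hx
      rw [hg] at this
      exact .inr (by rwa [ofSubtype_apply_of_mem g hxC])
    · rw [ofSubtype_apply_of_not_mem g hxC]
      exact .inl ⟨hx, hxC⟩
  · rintro (⟨hy, hyC⟩ | hy)
    · exact ⟨y, hy, ofSubtype_apply_of_not_mem g hyC⟩
    · have : (⟨y, hWC hy⟩ : C) ∈ g • (((↑) : C → α) ⁻¹' V) := hg ▸ hy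
      obtain ⟨z, hz, hzy⟩ := this
      refine ⟨z, hz, ?_⟩
      change ofSubtype g z = y
      rw [ofSubtype_apply_coe]
      exact congrArg Subtype.val hzy

lemma exists_mem_fixingSubgroup_sup_smul_eq {A B V : Set α} (hAB : (A ∩ B).Infinite)
    (hA : (A \ B).Infinite) (hB : (B \ A).Infinite) (hV : V ⊆ A ∪ B) (hVi : V.Infinite)
    (hVc : ((A ∪ B) \ V).Infinite) :
    ∃ h ∈ fixingSubgroup (Perm α) Aᶜ ⊔ fixingSubgroup (Perm α) Bᶜ, h • V = A := by
  set H := fixingSubgroup (Perm α) Aᶜ ⊔ fixingSubgroup (Perm α) Bᶜ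
  have hAH : fixingSubgroup (Perm α) Aᶜ ≤ H := le_sup_left
  have hBH : fixingSubgroup (Perm α) Bᶜ ≤ H := le_sup_right
  obtain ⟨Q, hQ, hQi, hQc⟩ := hAB.exists_subset_infinite_sdiff_infinite
  -- Make `V` split `A` into two infinite parts (if it does not, it splits `B`, and moving its
  -- part in `B` onto `Q` helps), then move its part in `A` onto `(A \ B) ∪ Q`, then its part in
  -- `B` onto `A ∩ B`.
  obtain ⟨h₁, hh₁, hV₁A, hAV₁, hV₁⟩ : ∃ h₁ ∈ H, (h₁ • V ∩ A).Infinite ∧ (A \ h₁ • V).Infinite ∧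
      h₁ • V ⊆ A ∪ B := by
    by_cases hbal : (V ∩ A).Infinite ∧ (A \ V).Infinite
    · exact ⟨1, H.one_mem, by simpa only [one_smul] using ⟨hbal.1, hbal.2, hV⟩⟩
    have hbalB : (V ∩ B).Infinite ∧ (B \ V).Infinite := by
      rcases not_and_or.1 hbal with hfin | hfin <;> rw [not_infinite] at hfin
      · exact ⟨(hVi.sdiff hfin).mono fun x => by grind, (hAB.sdiff hfin).mono fun x => by grind⟩
      · exact ⟨(hAB.sdiff hfin).mono fun x => by grind, (hVc.sdiff hfin).mono fun x => by grind⟩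
    obtain ⟨h, hh, hhV⟩ := exists_mem_fixingSubgroup_smul_eq hbalB.1 hbalB.2
      (hQ.trans inter_subset_right) hQi (hQc.mono fun x => by grind)
    refine ⟨h, hBH hh, ?_⟩
    rw [hhV]
    exact ⟨hQi.mono fun x => by grind, hQc.mono fun x => by grind, fun x => by grind⟩
  obtain ⟨h₂, hh₂, hV₂⟩ := exists_mem_fixingSubgroup_smul_eq hV₁A hAV₁ (W := A \ B ∪ Q)
    (fun x => by grind) (hA.mono subset_union_left) (hQc.mono fun x => by grind)
  obtain ⟨h₃, hh₃, hV₃⟩ := exists_mem_fixingSubgroup_smul_eq (V := h₂ • h₁ • V) (W := A ∩ B)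
    (hQi.mono fun x => by grind) (hQc.mono fun x => by grind) inter_subset_right hAB
    (hB.mono fun x => by grind)
  refine ⟨h₃ * h₂ * h₁, H.mul_mem (H.mul_mem (hBH hh₃) (hAH hh₂)) hh₁, ?_⟩
  rw [mul_smul, mul_smul, hV₃, hV₂]
  ext x
  grind

theorem fixingSubgroup_compl_sup_fixingSubgroup_compl {A B : Set α} (hAB : (A ∩ B).Infinite)
    (hA : (A \ B).Infinite) (hB : (B \ A).Infinite) :
    fixingSubgroup (Perm α) Aᶜ ⊔ fixingSubgroup (Perm α) Bᶜ = fixingSubgroup (Perm α) (A ∪ B)ᶜ := by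
  set H := fixingSubgroup (Perm α) Aᶜ ⊔ fixingSubgroup (Perm α) Bᶜ
  have hH : H ≤ fixingSubgroup (Perm α) (A ∪ B)ᶜ :=
    sup_le (fixingSubgroup_antitone _ _ (compl_subset_compl.2 subset_union_left))
      (fixingSubgroup_antitone _ _ (compl_subset_compl.2 subset_union_right))
  refine le_antisymm hH fun g hg => ?_
  have hgAB : g • (A ∪ B) = A ∪ B := by
    rw [← mem_stabilizer_iff, ← stabilizer_compl]
    exact fixingSubgroup_le_stabilizer _ _ hg
  obtain ⟨h, hh, hhg⟩ := exists_mem_fixingSubgroup_sup_smul_eq hAB hA hB (V := g • A)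
    (hgAB ▸ smul_set_mono subset_union_left) ((hAB.mono inter_subset_left).smul_set)
    ((hB.smul_set (a := g)).mono (by
      rw [smul_set_sdiff]
      exact sdiff_subset_sdiff_left (hgAB ▸ smul_set_mono subset_union_right)))
  have hhgA : h * g ∈ stabilizer (Perm α) A := by rw [mem_stabilizer_iff, mul_smul, hhg]
  have hhgH := mem_fixingSubgroup_sup_of_mem_stabilizer hhgA (mul_mem (hH hh) hg)
  simpa using H.mul_mem (H.inv_mem hh) hhgH

end Countable

end Equiv.Perm

instance {𝕜 : Type*} [AddCommGroup 𝕜] [Countable 𝕜] (p : 𝕜) : Countable (AddCircle p) :=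
  Quotient.countable

local notation "𝕋" => AddCircle (1 : ℚ)

namespace RatCircle

def arc (a b : ℚ) : Set 𝕋 := (↑) '' Ico a b

lemma injOn_coe : InjOn ((↑) : ℚ → 𝕋) (Ico 0 1) := fun _ hx _ hy h =>
  (AddCircle.coe_eq_coe_iff_of_mem_Ico (a := 0) (by rwa [zero_add]) (by rwa [zero_add])).1 h

lemma arc_zero_one : arc 0 1 = univ := by
  have := AddCircle.coe_image_Ico_eq (1 : ℚ) 0
  rwa [zero_add] at this

lemma arc_mono {a b c d : ℚ} (hca : c ≤ a) (hbd : b ≤ d) : arc a b ⊆ arc c d :=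
  image_mono (Ico_subset_Ico hca hbd)

lemma arc_infinite {a b : ℚ} (ha : 0 ≤ a) (hab : a < b) (hb : b ≤ 1) : (arc a b).Infinite :=
  (Ico_infinite hab).image (injOn_coe.mono (Ico_subset_Ico ha hb))

lemma disjoint_arc {a b c d : ℚ} (ha : 0 ≤ a) (hbc : b ≤ c) (hd : d ≤ 1) :
    Disjoint (arc a b) (arc c d) := by
  refine Set.disjoint_left.2 ?_
  rintro _ ⟨x, hx, rfl⟩ ⟨y, hy, hyx⟩
  have := injOn_coe ⟨by linarith [hy.1, hx.1, hx.2], by linarith [hy.2]⟩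
    ⟨by linarith [hx.1], by linarith [hx.2, hy.1, hy.2]⟩ hyx
  linarith [hx.2, hy.1]

lemma arc_union_arc {a b c d : ℚ} (hab : a ≤ b) (hbc : b ≤ c) (hcd : c ≤ d) :
    arc a c ∪ arc b d = arc a d := by
  rw [arc, arc, ← image_union, Ico_union_Ico' hbc (by linarith), min_eq_left hab,
    max_eq_right hcd, arc]

theorem fixingSubgroup_arc_sup {a b c d : ℚ} (ha : 0 ≤ a) (hab : a < b) (hbc : b < c)
    (hcd : c < d) (hd : d ≤ 1) :
    fixingSubgroup (Perm 𝕋) (arc a c)ᶜ ⊔ fixingSubgroup (Perm 𝕋) (arc b d)ᶜ =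
      fixingSubgroup (Perm 𝕋) (arc a d)ᶜ := by
  rw [Perm.fixingSubgroup_compl_sup_fixingSubgroup_compl, arc_union_arc hab.le hbc.le hcd.le]
  · exact (arc_infinite (by linarith) hbc (by linarith)).mono
      (subset_inter (arc_mono hab.le le_rfl) (arc_mono le_rfl hcd.le))
  · exact (arc_infinite ha hab (by linarith)).mono
      (subset_sdiff.2 ⟨arc_mono le_rfl hbc.le, disjoint_arc ha le_rfl hd⟩)
  · exact (arc_infinite (by linarith) hcd hd).mono
      (subset_sdiff.2 ⟨arc_mono hbc.le le_rfl, (disjoint_arc ha le_rfl hd).symm⟩)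

theorem eq_top_of_forall_fixingSubgroup_arc_le {H : Subgroup (Perm 𝕋)} {δ : ℚ} (hδ : 0 < δ)
    (hH : ∀ a b : ℚ, 0 ≤ a → b ≤ 1 → b - a ≤ δ → fixingSubgroup (Perm 𝕋) (arc a b)ᶜ ≤ H) :
    H = ⊤ := by
  obtain ⟨m, hm⟩ := exists_nat_gt (2 / δ + 2)
  have hδm : 2 < δ * m := (div_lt_iff₀' hδ).1 (by linarith)
  have hm2 : 2 ≤ m := by
    have : (2 : ℚ) < m := by linarith [div_pos two_pos hδ]
    exact_mod_cast this.le
  have hm0 : (0 : ℚ) < m := by positivity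
  have hgrow : ∀ k : ℕ, 2 ≤ k → k ≤ m → fixingSubgroup (Perm 𝕋) (arc 0 (k / m))ᶜ ≤ H := by
    intro k hk
    induction k, hk using Nat.le_induction with
    | base =>
      intro h2m
      refine hH _ _ le_rfl ?_ ?_
      · rw [div_le_one hm0]
        exact_mod_cast h2m
      · rw [sub_zero, Nat.cast_ofNat, div_le_iff₀ hm0]
        linarith
    | succ k hk ih =>
      intro hkm
      have hk2 : (2 : ℚ) ≤ k := by exact_mod_cast hk
      have hkm' : (k : ℚ) + 1 ≤ m := by exact_mod_cast hkm
      have hk1 : 0 < ((k : ℚ) - 1) / m := div_pos (by linarith) hm0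
      rw [Nat.cast_succ, ← fixingSubgroup_arc_sup (b := (k - 1) / m) (c := k / m) le_rfl
        hk1 (by gcongr; linarith) (by gcongr; linarith) ((div_le_one hm0).2 hkm')]
      refine sup_le (ih (by omega)) (hH _ _ hk1.le ((div_le_one hm0).2 hkm') ?_)
      rw [← sub_div, div_le_iff₀ hm0]
      linarith
  rw [eq_top_iff, ← fixingSubgroup_empty (Perm 𝕋) 𝕋, ← compl_univ, ← arc_zero_one]
  simpa [div_self hm0.ne'] using hgrow m hm2 le_rfl

def movesLessThan (r : ℚ) : Set (Perm 𝕋) := {f | ∀ x, ∃ q : ℚ, |q| < r ∧ f x = x + q}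

lemma fixingSubgroup_arc_subset_movesLessThan {a b r : ℚ} (hr : 0 < r) (hab : b - a ≤ r) :
    (fixingSubgroup (Perm 𝕋) (arc a b)ᶜ : Set (Perm 𝕋)) ⊆ movesLessThan r := by
  intro f hf x
  by_cases hx : x ∈ arc a b
  · have hfA : f • arc a b = arc a b := by
      rw [← mem_stabilizer_iff, ← stabilizer_compl]
      exact fixingSubgroup_le_stabilizer _ _ hf
    obtain ⟨s, hs, rfl⟩ := hx
    obtain ⟨t, ht, hts⟩ : f s ∈ arc a b := hfA ▸ smul_mem_smul_set (mem_image_of_mem _ hs)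
    refine ⟨t - s, abs_sub_lt_iff.2 ⟨by linarith [hs.1, ht.2], by linarith [hs.2, ht.1]⟩, ?_⟩
    rw [← hts, ← AddCircle.coe_add, add_sub_cancel]
  · refine ⟨0, by rwa [abs_zero], ?_⟩
    rw [QuotientAddGroup.mk_zero, add_zero]
    exact (mem_fixingSubgroup_iff _).1 hf x hx

lemma movesLessThan_mul_subset (r s : ℚ) :
    movesLessThan r * movesLessThan s ⊆ movesLessThan (r + s) := by
  rintro _ ⟨f, hf, g, hg, rfl⟩ x
  obtain ⟨q, hq, hgx⟩ := hg x
  obtain ⟨p, hp, hfx⟩ := hf (g x)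
  refine ⟨q + p, (abs_add_le q p).trans_lt (by linarith), ?_⟩
  rw [Perm.mul_apply, hfx, hgx, AddCircle.coe_add, add_assoc]

lemma movesLessThan_pow_subset (r : ℚ) {k : ℕ} (hk : k ≠ 0) :
    movesLessThan r ^ k ⊆ movesLessThan (k * r) := by
  induction k, Nat.one_le_iff_ne_zero.2 hk using Nat.le_induction with
  | base => simp
  | succ k hk ih =>
    rw [pow_succ, Nat.cast_succ, add_one_mul]
    exact (mul_subset_mul (ih (by omega)) le_rfl).trans (movesLessThan_mul_subset _ _)

lemma addLeft_half_notMem_movesLessThan :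
    Equiv.addLeft ((1 / 2 : ℚ) : 𝕋) ∉ movesLessThan (1 / 2) := by
  intro h
  obtain ⟨q, hq, hq0⟩ := h 0
  rw [abs_lt] at hq
  simp only [coe_addLeft, add_zero, zero_add] at hq0
  rw [AddCircle.coe_eq_coe_iff_of_mem_Ico (a := q)
    ⟨by linarith, by linarith⟩ ⟨le_rfl, by linarith⟩] at hq0
  linarith

end RatCircle

open RatCircle

theorem stmt8 (n : ℕ) (hn : 0 < n)
    (U : Set (Equiv.Perm (AddCircle (1 : ℚ))))
    (hUdef : U = {f | ∀ x : AddCircle (1 : ℚ),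
      ∃ q : ℚ, |q| < 1 / (2 * n) ∧ f x = x + (q : AddCircle (1 : ℚ))}) :
    Subgroup.closure U = ⊤ ∧ U ^ n ≠ Set.univ := by
  have hU : U = movesLessThan (1 / (2 * n)) := hUdef
  have hδ : (0 : ℚ) < 1 / (2 * n) := by positivity
  subst hU
  refine ⟨eq_top_of_forall_fixingSubgroup_arc_le hδ fun a b _ _ hab f hf =>
    Subgroup.subset_closure (fixingSubgroup_arc_subset_movesLessThan hδ hab hf), fun h => ?_⟩
  have hpow := movesLessThan_pow_subset (1 / (2 * n)) hn.ne'
  rw [h, mul_one_div, div_mul_cancel_right₀ (by positivity)] at hpow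
  exact addLeft_half_notMem_movesLessThan (by simpa using hpow (mem_univ _))
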